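/- arXiv:1106.6168 — 4 statements merged into one kernel-verified Lean document; each statement's English description precedes it below -/
import Mathlib

section
/- Let $t_0, t_3 > 0$ with $8 t_0 t_3^2 \le 1$, and let $A = \frac{1 + 20 t_0 t_3^2 - 8 t_0^2 t_3^4 - (1 - 8 t_0 t_3^2)^{3/2}}{32 t_3^3}$, $r = \frac{\sqrt{1-\sqrt{1-8 t_0 t_3^2}}}{2 t_3}$, and $a = \frac{1-\sqrt{1-8 t_0 t_3^2}}{4 t_3}$. Then for every nonzero complex number $w$, the pair $z = r w + a w^{-2}$, $\xi = a w^2 + r w^{-1}$ satisfies the spectral curve equation $\xi^3 - t_3 z^2 \xi^2 - (t_0 t_3 + 1/t_3) z \xi + z^3 + A = 0$. -/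
/-!
Everything is expressed through `r`: by definition of `r`, `√(1 - 8 t0 t3²) = 1 - 4 t3² r²`,
hence `a = t3 r²`, `t0 = r² - 2 t3² r⁴` and `A = r² (1 - t3² r²)³ / t3`. After these
substitutions the curve equation at `(h(w), h(1/w))` is a rational identity in `r`, `t3`, `w`.
-/

open Complex

namespace NormalMatrixModel

/-- The paper's `h(w) = r w + a w⁻²`. -/
def conformalMap {K : Type*} [Field K] (r a w : K) : K := r * w + a * (w ^ 2)⁻¹

def spectralCurve {K : Type*} [Field K] (t0 t3 A z ξ : K) : K :=
  ξ ^ 3 - t3 * z ^ 2 * ξ ^ 2 - (t0 * t3 + 1 / t3) * z * ξ + z ^ 3 + A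

theorem spectralCurve_conformalMap {K : Type*} [Field K] {t3 w : K} (ht3 : t3 ≠ 0)
    (hw : w ≠ 0) (r : K) :
    spectralCurve (r ^ 2 - 2 * t3 ^ 2 * r ^ 4) t3 (r ^ 2 * (1 - t3 ^ 2 * r ^ 2) ^ 3 / t3)
      (conformalMap r (t3 * r ^ 2) w) (conformalMap r (t3 * r ^ 2) w⁻¹) = 0 := by
  unfold spectralCurve conformalMap
  field_simp
  ring

section Parameters

variable {t0 t3 r : ℝ}

theorem sqrt_eq_of_radius (ht0 : 0 ≤ t0) (ht3 : t3 ≠ 0)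
    (hr : r = √(1 - √(1 - 8 * t0 * t3 ^ 2)) / (2 * t3)) :
    √(1 - 8 * t0 * t3 ^ 2) = 1 - 4 * t3 ^ 2 * r ^ 2 := by
  have hs : √(1 - 8 * t0 * t3 ^ 2) ≤ 1 := Real.sqrt_le_one.mpr (by nlinarith)
  rw [hr, div_pow, Real.sq_sqrt (by linarith)]
  field_simp
  ring

theorem coeff_eq_of_radius (ht0 : 0 ≤ t0) (ht3 : t3 ≠ 0)
    (hr : r = √(1 - √(1 - 8 * t0 * t3 ^ 2)) / (2 * t3)) :
    (1 - √(1 - 8 * t0 * t3 ^ 2)) / (4 * t3) = t3 * r ^ 2 := by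
  rw [sqrt_eq_of_radius ht0 ht3 hr]
  field_simp
  ring

theorem t0_eq_of_radius (ht0 : 0 ≤ t0) (ht3 : t3 ≠ 0) (h : 8 * t0 * t3 ^ 2 ≤ 1)
    (hr : r = √(1 - √(1 - 8 * t0 * t3 ^ 2)) / (2 * t3)) :
    t0 = r ^ 2 - 2 * t3 ^ 2 * r ^ 4 := by
  have hsq := Real.sq_sqrt (sub_nonneg.mpr h)
  rw [sqrt_eq_of_radius ht0 ht3 hr] at hsq
  have h8 : 8 * t3 ^ 2 ≠ 0 := by positivity
  apply mul_left_cancel₀ h8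
  linear_combination hsq

theorem const_eq_of_radius (ht0 : 0 ≤ t0) (ht3 : t3 ≠ 0) (h : 8 * t0 * t3 ^ 2 ≤ 1)
    (hr : r = √(1 - √(1 - 8 * t0 * t3 ^ 2)) / (2 * t3)) :
    (1 + 20 * t0 * t3 ^ 2 - 8 * t0 ^ 2 * t3 ^ 4 - (1 - 8 * t0 * t3 ^ 2) ^ ((3 : ℝ) / 2))
      / (32 * t3 ^ 3) = r ^ 2 * (1 - t3 ^ 2 * r ^ 2) ^ 3 / t3 := by
  rw [Real.rpow_div_two_eq_sqrt _ (sub_nonneg.mpr h), sqrt_eq_of_radius ht0 ht3 hr,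
    t0_eq_of_radius ht0 ht3 h hr]
  norm_cast
  field_simp
  ring

end Parameters

end NormalMatrixModel

/-- Rational parametrization of the spectral curve of the normal matrix model
with cubic potential. -/
theorem spectral_curve_parametrization
    (t0 t3 : ℝ) (ht0 : 0 < t0) (ht3 : 0 < t3) (h : 8 * t0 * t3 ^ 2 ≤ 1)
    (A r a : ℝ)
    (hA : A = (1 + 20 * t0 * t3 ^ 2 - 8 * t0 ^ 2 * t3 ^ 4
        - (1 - 8 * t0 * t3 ^ 2) ^ ((3 : ℝ) / 2)) / (32 * t3 ^ 3))
    (hr : r = Real.sqrt (1 - Real.sqrt (1 - 8 * t0 * t3 ^ 2)) / (2 * t3))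
    (ha : a = (1 - Real.sqrt (1 - 8 * t0 * t3 ^ 2)) / (4 * t3))
    (w : ℂ) (hw : w ≠ 0)
    (z ξ : ℂ)
    (hz : z = (r : ℂ) * w + (a : ℂ) * (w ^ 2)⁻¹)
    (hξ : ξ = (a : ℂ) * w ^ 2 + (r : ℂ) * w⁻¹) :
    ξ ^ 3 - (t3 : ℂ) * z ^ 2 * ξ ^ 2 - ((t0 : ℂ) * t3 + 1 / t3) * z * ξ
      + z ^ 3 + (A : ℂ) = 0 := by
  have ht3ne := ht3.ne'
  rw [ha, NormalMatrixModel.coeff_eq_of_radius ht0.le ht3ne hr] at hξ hz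
  rw [hA, NormalMatrixModel.const_eq_of_radius ht0.le ht3ne h hr,
    NormalMatrixModel.t0_eq_of_radius ht0.le ht3ne h hr]
  have key := NormalMatrixModel.spectralCurve_conformalMap (ofReal_ne_zero.mpr ht3ne) hw (r : ℂ)
  simp only [NormalMatrixModel.spectralCurve, NormalMatrixModel.conformalMap, inv_pow,
    inv_inv] at key
  rw [hz, hξ]
  push_cast
  linear_combination key
end

section
/- Let $t_0, t_3 > 0$ with $8 t_0 t_3^2 < 1$. Define $\widehat{x} = \frac{3 + \sqrt{1-8t_0 t_3^2}}{4t_3}$ and $x^* = \frac{3}{4 t_3}(1 - \sqrt{1-8 t_0 t_3^2})^{2/3}$. Then $0 < x^* < \widehat{x}$. -/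
/-- The node `x̂` of the spectral curve lies strictly to the right of the
endpoint `x*` of the star where the zeros accumulate. -/
theorem xstar_lt_xhat (t0 t3 : ℝ) (ht0 : 0 < t0) (ht3 : 0 < t3)
    (h : 8 * t0 * t3 ^ 2 < 1)
    (xhat xstar : ℝ)
    (hxhat : xhat = (3 + Real.sqrt (1 - 8 * t0 * t3 ^ 2)) / (4 * t3))
    (hxstar : xstar = 3 / (4 * t3)
        * (1 - Real.sqrt (1 - 8 * t0 * t3 ^ 2)) ^ ((2 : ℝ) / 3)) :
    0 < xstar ∧ xstar < xhat := by
  have hu : 0 < 1 - 8 * t0 * t3 ^ 2 := by linarith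
  set s := Real.sqrt (1 - 8 * t0 * t3 ^ 2) with hsdef
  have hs0 : 0 < s := Real.sqrt_pos.mpr hu
  have hs1 : s < 1 := by
    have := Real.sq_sqrt hu.le
    rw [← hsdef] at this
    nlinarith [mul_pos ht0 (pow_pos ht3 2)]
  have hpow_pos : 0 < (1 - s) ^ ((2:ℝ)/3) := Real.rpow_pos_of_pos (by linarith) _
  have hpow_lt : (1 - s) ^ ((2:ℝ)/3) < 1 :=
    Real.rpow_lt_one (by linarith) (by linarith) (by norm_num)
  constructor
  · rw [hxstar]; positivity
  · rw [hxstar, hxhat]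
    rw [div_mul_eq_mul_div, div_lt_div_iff₀ (by positivity) (by positivity)]
    nlinarith
end

section
/- Let $t_0, t_3 > 0$ with $8 t_0 t_3^2 \le 1$, set $\widehat{x} = \frac{3 + \sqrt{1-8 t_0 t_3^2}}{4 t_3}$ and $A = \frac{1 + 20 t_0 t_3^2 - 8 t_0^2 t_3^4 - (1 - 8 t_0 t_3^2)^{3/2}}{32 t_3^3}$. Then $z = \widehat{x}$ is a double root of the quartic polynomial $Q(z) = 2 z^3 - t_3 z^4 - (t_0 t_3 + 1/t_3) z^2 + A$, i.e., $Q(\widehat{x}) = 0$ and $Q'(\widehat{x}) = 0$. -/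
/-- `x̂` is a double root of the quartic obtained by restricting the spectral
curve to the diagonal `ξ = z`. -/
theorem xhat_double_root (t0 t3 : ℝ) (ht0 : 0 < t0) (ht3 : 0 < t3)
    (h : 8 * t0 * t3 ^ 2 ≤ 1)
    (xhat A : ℝ)
    (hxhat : xhat = (3 + Real.sqrt (1 - 8 * t0 * t3 ^ 2)) / (4 * t3))
    (hA : A = (1 + 20 * t0 * t3 ^ 2 - 8 * t0 ^ 2 * t3 ^ 4
        - (1 - 8 * t0 * t3 ^ 2) ^ ((3 : ℝ) / 2)) / (32 * t3 ^ 3))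
    (Q : ℝ → ℝ)
    (hQ : Q = fun z => 2 * z ^ 3 - t3 * z ^ 4 - (t0 * t3 + 1 / t3) * z ^ 2 + A) :
    Q xhat = 0 ∧ deriv Q xhat = 0 := by
  have hx : (0:ℝ) ≤ 1 - 8 * t0 * t3 ^ 2 := by linarith
  set s := Real.sqrt (1 - 8 * t0 * t3 ^ 2) with hs
  have hs2 : s ^ 2 = 1 - 8 * t0 * t3 ^ 2 := Real.sq_sqrt hx
  have h32 : (1 - 8 * t0 * t3 ^ 2) ^ ((3 : ℝ) / 2) = s ^ 3 := by
    rw [show ((3:ℝ)/2) = (1/2) * (3:ℕ) by norm_num, Real.rpow_mul hx,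
      Real.rpow_natCast, ← Real.sqrt_eq_rpow]
  have ht3' : t3 ≠ 0 := ne_of_gt ht3
  constructor
  · have key : Q xhat =
        ((1/8 - t0 * t3 ^ 2 - 3/2 * s - 1/8 * s ^ 2) * (s ^ 2 - (1 - 8 * t0 * t3 ^ 2)))
          / (32 * t3 ^ 3) := by
      rw [hQ]
      simp only
      rw [hA, h32, hxhat]
      field_simp
      ring
    rw [key, hs2]
    ring
  · have H : HasDerivAt Q
        (2 * (3 * xhat ^ 2) - t3 * (4 * xhat ^ 3) - (t0 * t3 + 1 / t3) * (2 * xhat ^ 1)) xhat := by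
      rw [hQ]
      have h3 : HasDerivAt (fun z : ℝ => z ^ 3) (3 * xhat ^ 2) xhat := by
        simpa using hasDerivAt_pow 3 xhat
      have h4 : HasDerivAt (fun z : ℝ => z ^ 4) (4 * xhat ^ 3) xhat := by
        simpa using hasDerivAt_pow 4 xhat
      have h2 : HasDerivAt (fun z : ℝ => z ^ 2) (2 * xhat ^ 1) xhat := by
        simpa using hasDerivAt_pow 2 xhat
      exact (((h3.const_mul 2).sub (h4.const_mul t3)).sub
        (h2.const_mul (t0 * t3 + 1 / t3))).add_const A
    rw [H.deriv]
    have key : 2 * (3 * xhat ^ 2) - t3 * (4 * xhat ^ 3) - (t0 * t3 + 1 / t3) * (2 * xhat ^ 1) =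
        ((-3/2 - 1/2 * s) * (s ^ 2 - (1 - 8 * t0 * t3 ^ 2))) / (8 * t3 ^ 2) := by
      rw [hxhat]
      field_simp
      ring
    rw [key, hs2]
    ring
end

section
/- Let $t_0, t_3 > 0$, $n \in \mathbb{N}$, and suppose a sesquilinear Hermitian form $\langle \cdot, \cdot \rangle$ on complex polynomials satisfies the cubic structure relation $n \langle z f, g \rangle = t_0 \langle f, g' \rangle + n t_3 \langle f, z^2 g \rangle$ for all polynomials $f,g$. Let $P$ be a polynomial of degree $n$ such that $\langle P, z^j \rangle = 0$ for $j = 0, 1, \ldots, n-1$. Then for every $k \ge 0$ and every $0 \le j \le n - 2k - 1$, we have $\langle z^k P, z^j \rangle = 0$. -/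
open Polynomial

/-- Orthogonality conditions propagate under multiplication by `z` for a
Hermitian sesquilinear form satisfying the cubic structure relation. -/
theorem orthogonality_propagation (t0 t3 : ℝ) (ht0 : 0 < t0) (ht3 : 0 < t3)
    (n : ℕ) (B : Polynomial ℂ → Polynomial ℂ → ℂ)
    (hadd₁ : ∀ f₁ f₂ g, B (f₁ + f₂) g = B f₁ g + B f₂ g)
    (hadd₂ : ∀ f g₁ g₂, B f (g₁ + g₂) = B f g₁ + B f g₂)
    (hsmul₁ : ∀ (c : ℂ) f g, B (c • f) g = c * B f g)
    (hsmul₂ : ∀ (c : ℂ) f g, B f (c • g) = (starRingEnd ℂ) c * B f g)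
    (hherm : ∀ f g, B f g = (starRingEnd ℂ) (B g f))
    (hstruct : ∀ f g : Polynomial ℂ,
      (n : ℂ) * B (X * f) g
        = (t0 : ℂ) * B f (derivative g) + (n : ℂ) * (t3 : ℂ) * B f (X ^ 2 * g))
    (P : Polynomial ℂ) (hdeg : P.natDegree = n)
    (horth : ∀ j < n, B P (X ^ j) = 0) :
    ∀ k j : ℕ, j + 2 * k + 1 ≤ n → B (X ^ k * P) (X ^ j) = 0 := by
  intro k
  induction k with
  | zero =>
    intro j hj
    simpa using horth j (by omega)
  | succ k ih =>
    intro j hj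
    have hn : (n : ℂ) ≠ 0 := by
      have : 0 < n := by omega
      exact_mod_cast Nat.cast_ne_zero.mpr this.ne'
    have hs := hstruct (X ^ k * P) (X ^ j)
    rw [derivative_X_pow] at hs
    have h1 : B (X ^ k * P) (C (j : ℂ) * X ^ (j - 1)) = 0 := by
      rw [← smul_eq_C_mul, hsmul₂]
      rcases Nat.eq_zero_or_pos j with h | h
      · simp [h]
      · rw [ih (j - 1) (by omega), mul_zero]
    have h2 : B (X ^ k * P) (X ^ 2 * X ^ j) = 0 := by
      rw [← pow_add]
      exact ih (2 + j) (by omega)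
    rw [h1, h2, mul_zero, mul_zero, add_zero] at hs
    have h3 : B (X * (X ^ k * P)) (X ^ j) = 0 :=
      (mul_eq_zero.mp hs).resolve_left hn
    rw [pow_succ, mul_comm (X ^ k) X, mul_assoc]
    exact h3
end
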